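/- Let {(x_i, y_i)}_{i=1}^n ⊆ ℝ^d × {−1,1} be a dataset and let N_θ be a depth-2 ReLU network of width k for which there exist λ_1,…,λ_n ≥ 0 and σ'_{i,j} ∈ [0,1] (i ∈ [n], j ∈ [k]) satisfying the KKT conditions: (i) y_i · N_θ(x_i) ≥ 1 for all i ∈ [n]; (ii) λ_i = 0 whenever y_i · N_θ(x_i) ≠ 1; (iii) σ'_{i,j} = 1 if ⟨w_j, x_i⟩ + b_j > 0 and σ'_{i,j} = 0 if ⟨w_j, x_i⟩ + b_j < 0; (iv) w_j = Σ_{i=1}^n λ_i y_i v_j σ'_{i,j} x_i and (v) b_j = Σ_{i=1}^n λ_i y_i v_j σ'_{i,j} for all j ∈ [k]. Let I := {i ∈ [n] : y_i · N_θ(x_i) = 1}, I^+ := {i ∈ I : y_i = 1}, I^− := {i ∈ I : y_i = −1}, and m := |I|. Assume ‖x_i‖ = √d for all i ∈ I; m·(q+1) ≤ (d+1)/3 where q := max_{i≠j, i,j ∈ I} |⟨x_i, x_j⟩|; and |I^+| ≥ c·m and |I^−| ≥ c·m for some c ∈ (0,1]. Then there exists η > 0 such that z := η · Σ_{i ∈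 I} y_i x_i satisfies ‖z‖ ≤ 18·√(2d)/(c·√m), N_θ(x_i − z) ≤ −1 for every i ∈ I^+, and N_θ(x_i + z) ≥ 1 for every i ∈ I^−. -/

import Mathlib

/-!
By the stationarity conditions the preactivation of neuron `j` is `v j * φ j u` with
`φ j u = ∑_{l ∈ I} λ_l s_{lj} y_l (⟪x_l, u⟫ + 1)`, and near-orthogonality of the `x_l` gives
`y_i φ_j(x_i) = λ_i s_{ij} (d + 1) ± (q + 1) S_j`, where `S_j = ∑_{l ∈ I} λ_l s_{lj}`.
Fed into the margin equations `y_i N(x_i) = 1`, this bounds the total weight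
`(q + 1) ∑_j v_j² S_j ≤ 1`, while summing the margin equations over the `≥ c m` positive examples
shows that the neurons with `v_j > 0` carry weight `≥ 3 c m / (4 (d + 1))`.
Moving along `z = ∑_{l ∈ I} y_l x_l` shifts every `φ_j` by at least `η (d - m q) S_j`; with `η` as
in `flipScale` this beats the cross-talk `2 (q + 1) S_j`, so at a negative example the neurons with
`v_j > 0` push the output above `1`, while the others lose at most `(d + 1) ∑_j v_j² λ_i s_{ij}²`.
The positive examples follow by the symmetry `(y, v) ↦ (-y, -v)` of the KKT conditions.
-/

open InnerProductSpace Finset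

/-- A depth-2 ReLU network of width `k` with first-layer weights `w`, biases `b`
and second-layer weights `v`. -/
noncomputable def net {d k : ℕ} (w : Fin k → EuclideanSpace ℝ (Fin d))
    (b v : Fin k → ℝ) (z : EuclideanSpace ℝ (Fin d)) : ℝ :=
  ∑ j, v j * max 0 (⟪w j, z⟫_ℝ + b j)

theorem max_zero_eq_mul_of_sign {a σ : ℝ} (h1 : 0 < a → σ = 1) (h0 : a < 0 → σ = 0) :
    max 0 a = σ * a := by
  rcases lt_trichotomy a 0 with ha | rfl | ha
  · rw [h0 ha, max_eq_left ha.le, zero_mul]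
  · simp
  · rw [h1 ha, one_mul, max_eq_right ha.le]

theorem net_neg_right {d k : ℕ} (w : Fin k → EuclideanSpace ℝ (Fin d)) (b v : Fin k → ℝ)
    (u : EuclideanSpace ℝ (Fin d)) : net w b (-v) u = -net w b v u := by
  simp only [net, Pi.neg_apply, neg_mul, sum_neg_distrib]

theorem abs_mul_sum_sub_le {ι : Type*} {I : Finset ι} {K : ι → ι → ℝ} {y c : ι → ℝ} {i : ι}
    {D Q : ℝ} (hi : i ∈ I) (hQ : 0 ≤ Q) (hy : ∀ l ∈ I, |y l| = 1) (hc : ∀ l ∈ I, 0 ≤ c l)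
    (hdiag : K i i = D) (hoff : ∀ l ∈ I, l ≠ i → |K l i| ≤ Q) :
    |y i * ∑ l ∈ I, c l * (y l * K l i) - c i * D| ≤ Q * ∑ l ∈ I, c l := by
  classical
  have hyi : y i * y i = 1 := by rw [← abs_mul_abs_self, hy i hi, one_mul]
  rw [mul_sum, ← sum_erase_add I _ hi, hdiag,
    show y i * (c i * (y i * D)) = c i * D by linear_combination c i * D * hyi,
    add_sub_cancel_right]
  calc |∑ l ∈ I.erase i, y i * (c l * (y l * K l i))|
      ≤ ∑ l ∈ I.erase i, |y i * (c l * (y l * K l i))| := abs_sum_le_sum_abs _ _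
    _ ≤ ∑ l ∈ I.erase i, Q * c l := sum_le_sum fun l hl => by
        obtain ⟨hli, hl⟩ := mem_erase.1 hl
        rw [abs_mul, abs_mul, abs_mul, hy i hi, hy l hl, abs_of_nonneg (hc l hl)]
        nlinarith [hoff l hl hli, hc l hl]
    _ ≤ Q * ∑ l ∈ I, c l := by
        rw [← mul_sum]
        exact mul_le_mul_of_nonneg_left
          (sum_le_sum_of_subset_of_nonneg (erase_subset _ _) fun l hl _ => hc l hl) hQ

/-- The step `η` with `η (D - q m) = 2 (q + 1) + τ`, `τ = 4 (D + 1) / (c m)`: the `2 (q + 1)`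
absorbs the cross-talk between examples, and `τ` makes `τ ∑_{v_j > 0} v_j² S_j ≥ 3`. -/
noncomputable def flipScale (D q c m : ℝ) : ℝ :=
  (2 * (q + 1) + 4 * (D + 1) / (c * m)) / (D - q * m)

section flipScale

variable {D q c m : ℝ}

theorem half_le_sub_mul (hD : 0 ≤ D) (hm : 1 ≤ m) (hmq : m * (q + 1) ≤ (D + 1) / 3) :
    (D + 1) / 2 ≤ D - q * m := by
  linarith

theorem flipScale_pos (hD : 0 ≤ D) (hq : 0 ≤ q) (hm : 1 ≤ m)
    (hmq : m * (q + 1) ≤ (D + 1) / 3) (hc : 0 < c) : 0 < flipScale D q c m := by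
  have := half_le_sub_mul hD hm hmq
  unfold flipScale
  have : 0 < c * m := by positivity
  exact div_pos (by positivity) (by linarith)

theorem flipScale_mul_sub (hD : 0 ≤ D) (hm : 1 ≤ m)
    (hmq : m * (q + 1) ≤ (D + 1) / 3) :
    flipScale D q c m * (D - q * m) = 2 * (q + 1) + 4 * (D + 1) / (c * m) :=
  div_mul_cancel₀ _ (by linarith [half_le_sub_mul hD hm hmq])

theorem flipScale_mul_le (hD : 0 ≤ D) (hq : 0 ≤ q) (hm : 1 ≤ m)
    (hmq : m * (q + 1) ≤ (D + 1) / 3) (hc₀ : 0 < c) (hc₁ : c ≤ 1) :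
    flipScale D q c m * (c * m) ≤ 28 / 3 := by
  have hsub := half_le_sub_mul hD hm hmq
  have hcm : 0 < c * m := by positivity
  have : flipScale D q c m * (c * m)
      = (2 * (q + 1) * (c * m) + 4 * (D + 1)) / (D - q * m) := by
    unfold flipScale; field_simp
  rw [this, div_le_iff₀ (by linarith)]
  nlinarith [mul_le_mul_of_nonneg_right hc₁ (by positivity : (0:ℝ) ≤ m * (q + 1))]

end flipScale

structure NearOrthogonalOn {E ι : Type*} [NormedAddCommGroup E] [InnerProductSpace ℝ E]
    (x : ι → E) (I : Finset ι) (D q : ℝ) : Prop where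
  inner_self_eq : ∀ i ∈ I, ⟪x i, x i⟫_ℝ = D
  abs_inner_le : ∀ i ∈ I, ∀ j ∈ I, i ≠ j → |⟪x i, x j⟫_ℝ| ≤ q

noncomputable def dualAct {E ι κ : Type*} [NormedAddCommGroup E] [InnerProductSpace ℝ E]
    (x : ι → E) (y lam : ι → ℝ) (s : ι → κ → ℝ) (I : Finset ι) (j : κ) (u : E) : ℝ :=
  ∑ l ∈ I, lam l * s l j * (y l * (⟪x l, u⟫_ℝ + 1))

noncomputable def dualMass {ι κ : Type*} (lam : ι → ℝ) (s : ι → κ → ℝ) (I : Finset ι)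
    (j : κ) : ℝ :=
  ∑ l ∈ I, lam l * s l j

namespace NearOrthogonalOn

variable {E ι κ : Type*} [NormedAddCommGroup E] [InnerProductSpace ℝ E]
  {x : ι → E} {I : Finset ι} {D q : ℝ} {y lam : ι → ℝ} {s : ι → κ → ℝ} {i : ι}

theorem nonneg (hx : NearOrthogonalOn x I D q) (hi : i ∈ I) : 0 ≤ D :=
  hx.inner_self_eq i hi ▸ real_inner_self_nonneg

theorem abs_mul_inner_sum_sub_le (hx : NearOrthogonalOn x I D q) (hq : 0 ≤ q)
    (hy : ∀ l ∈ I, |y l| = 1) (hi : i ∈ I) :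
    |y i * ⟪x i, ∑ l ∈ I, y l • x l⟫_ℝ - D| ≤ q * #I := by
  have := abs_mul_sum_sub_le (K := fun l i => ⟪x l, x i⟫_ℝ) (c := fun _ => 1) hi hq hy
    (fun _ _ => zero_le_one) (hx.inner_self_eq i hi)
    (fun l hl hli => hx.abs_inner_le l hl i hi hli)
  simpa [inner_sum, real_inner_smul_right, real_inner_comm] using this

theorem norm_sum_sq_le (hx : NearOrthogonalOn x I D q) (hq : 0 ≤ q)
    (hy : ∀ l ∈ I, |y l| = 1) :
    ‖∑ l ∈ I, y l • x l‖ ^ 2 ≤ #I * (D + q * #I) := by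
  rw [← real_inner_self_eq_norm_sq, sum_inner]
  calc ∑ l ∈ I, ⟪y l • x l, ∑ l ∈ I, y l • x l⟫_ℝ
      = ∑ l ∈ I, y l * ⟪x l, ∑ l ∈ I, y l • x l⟫_ℝ := by simp only [real_inner_smul_left]
    _ ≤ ∑ _l ∈ I, (D + q * #I) := sum_le_sum fun l hl =>
        by linarith [(abs_le.1 (hx.abs_mul_inner_sum_sub_le hq hy hl)).2]
    _ = #I * (D + q * #I) := by rw [sum_const, nsmul_eq_mul]

theorem abs_mul_dualAct_sub_le (hx : NearOrthogonalOn x I D q) (hq : 0 ≤ q)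
    (hy : ∀ l ∈ I, |y l| = 1) (hlam : ∀ l, 0 ≤ lam l) (hs : ∀ l j, 0 ≤ s l j) (hi : i ∈ I)
    (j : κ) :
    |y i * dualAct x y lam s I j (x i) - lam i * s i j * (D + 1)|
      ≤ (q + 1) * dualMass lam s I j := by
  refine abs_mul_sum_sub_le (K := fun l i => ⟪x l, x i⟫_ℝ + 1) hi (by linarith) hy
    (fun l _ => mul_nonneg (hlam l) (hs l j)) (by rw [hx.inner_self_eq i hi])
    fun l hl hli => ?_
  calc |⟪x l, x i⟫_ℝ + 1| ≤ |⟪x l, x i⟫_ℝ| + |1| := abs_add_le _ _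
    _ ≤ q + 1 := by rw [abs_one]; linarith [hx.abs_inner_le l hl i hi hli]

theorem sub_mul_dualMass_le (hx : NearOrthogonalOn x I D q) (hq : 0 ≤ q)
    (hy : ∀ l ∈ I, |y l| = 1) (hlam : ∀ l, 0 ≤ lam l) (hs : ∀ l j, 0 ≤ s l j) (j : κ) :
    (D - q * #I) * dualMass lam s I j
      ≤ ∑ l ∈ I, lam l * s l j * (y l * ⟪x l, ∑ p ∈ I, y p • x p⟫_ℝ) := by
  rw [dualMass, mul_sum]
  refine sum_le_sum fun l hl => ?_
  rw [mul_comm]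
  exact mul_le_mul_of_nonneg_left
    (by linarith [(abs_le.1 (hx.abs_mul_inner_sum_sub_le hq hy hl)).1])
    (mul_nonneg (hlam l) (hs l j))

theorem norm_flipScale_smul_le {c : ℝ} (hx : NearOrthogonalOn x I D q) (hq : 0 ≤ q)
    (hy : ∀ l ∈ I, |y l| = 1) (hI : I.Nonempty) (hmq : #I * (q + 1) ≤ (D + 1) / 3)
    (hc₀ : 0 < c) (hc₁ : c ≤ 1) :
    ‖flipScale D q c #I • ∑ l ∈ I, y l • x l‖
      ≤ 18 * Real.sqrt (2 * D) / (c * Real.sqrt #I) := by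
  obtain ⟨i, hi⟩ := hI
  have hm : (1 : ℝ) ≤ #I := by exact_mod_cast card_pos.2 ⟨i, hi⟩
  have hD := hx.nonneg hi
  have hζ : ‖∑ l ∈ I, y l • x l‖ ≤ Real.sqrt #I * Real.sqrt (2 * D) := by
    rw [← Real.sqrt_mul (by positivity)]
    refine Real.le_sqrt_of_sq_le ((hx.norm_sum_sq_le hq hy).trans ?_)
    nlinarith [half_le_sub_mul hD hm hmq]
  have hη := flipScale_pos hD hq hm hmq hc₀
  rw [norm_smul, Real.norm_of_nonneg hη.le, le_div_iff₀ (by positivity)]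
  calc flipScale D q c #I * ‖∑ l ∈ I, y l • x l‖ * (c * Real.sqrt #I)
      ≤ flipScale D q c #I * (Real.sqrt #I * Real.sqrt (2 * D)) * (c * Real.sqrt #I) := by
        gcongr
    _ = flipScale D q c #I * (c * #I) * Real.sqrt (2 * D) := by
        linear_combination flipScale D q c #I * c * Real.sqrt (2 * D) *
          Real.mul_self_sqrt (Nat.cast_nonneg (α := ℝ) #I)
    _ ≤ 18 * Real.sqrt (2 * D) := by
        nlinarith [flipScale_mul_le hD hq hm hmq hc₀ hc₁, Real.sqrt_nonneg (2 * D)]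

end NearOrthogonalOn

theorem dualAct_add_smul {E ι κ : Type*} [NormedAddCommGroup E] [InnerProductSpace ℝ E]
    (x : ι → E) (y lam : ι → ℝ) (s : ι → κ → ℝ) (I : Finset ι) (j : κ) (u z : E) (t : ℝ) :
    dualAct x y lam s I j (u + t • z)
      = dualAct x y lam s I j u + t * ∑ l ∈ I, lam l * s l j * (y l * ⟪x l, z⟫_ℝ) := by
  simp only [dualAct, mul_sum, ← sum_add_distrib, inner_add_right, real_inner_smul_right]
  exact sum_congr rfl fun l _ => by ring

noncomputable def weight {ι κ : Type*} (v : κ → ℝ) (lam : ι → ℝ) (s : ι → κ → ℝ)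
    (I : Finset ι) (T : Finset κ) : ℝ :=
  ∑ j ∈ T, v j ^ 2 * dualMass lam s I j

noncomputable def selfWeight {ι κ : Type*} [Fintype κ] (v : κ → ℝ) (lam : ι → ℝ)
    (s : ι → κ → ℝ) (i : ι) : ℝ :=
  ∑ j, v j ^ 2 * (lam i * s i j ^ 2)

/-- Conditions (ii)–(v) of the KKT conditions; `s i j` is the ReLU subgradient `σ'_{i,j}`. -/
structure IsKKTPoint {d n k : ℕ} (x : Fin n → EuclideanSpace ℝ (Fin d)) (y : Fin n → ℝ)
    (w : Fin k → EuclideanSpace ℝ (Fin d)) (b v : Fin k → ℝ) (lam : Fin n → ℝ)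
    (s : Fin n → Fin k → ℝ) : Prop where
  lam_nonneg : ∀ i, 0 ≤ lam i
  s_mem_Icc : ∀ i j, s i j ∈ Set.Icc (0 : ℝ) 1
  lam_eq_zero : ∀ i, y i * net w b v (x i) ≠ 1 → lam i = 0
  s_eq_one : ∀ i j, 0 < ⟪w j, x i⟫_ℝ + b j → s i j = 1
  s_eq_zero : ∀ i j, ⟪w j, x i⟫_ℝ + b j < 0 → s i j = 0
  w_eq : ∀ j, w j = ∑ i, (lam i * y i * v j * s i j) • x i
  b_eq : ∀ j, b j = ∑ i, lam i * y i * v j * s i j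

namespace IsKKTPoint

variable {d n k : ℕ} {x : Fin n → EuclideanSpace ℝ (Fin d)} {y : Fin n → ℝ}
  {w : Fin k → EuclideanSpace ℝ (Fin d)} {b v : Fin k → ℝ} {lam : Fin n → ℝ}
  {s : Fin n → Fin k → ℝ} {I : Finset (Fin n)} {i : Fin n} {j : Fin k} {D q : ℝ}

local notation "φ" => dualAct x y lam s I
local notation "S" => dualMass lam s I

theorem neg (h : IsKKTPoint x y w b v lam s) : IsKKTPoint x (-y) w b (-v) lam s where
  lam_nonneg := h.lam_nonneg
  s_mem_Icc := h.s_mem_Icc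
  lam_eq_zero i hi := h.lam_eq_zero i (by rwa [Pi.neg_apply, net_neg_right, neg_mul_neg] at hi)
  s_eq_one := h.s_eq_one
  s_eq_zero := h.s_eq_zero
  w_eq j := by simpa only [Pi.neg_apply, mul_neg, neg_mul, neg_neg] using h.w_eq j
  b_eq j := by simpa only [Pi.neg_apply, mul_neg, neg_mul, neg_neg] using h.b_eq j

theorem s_nonneg (h : IsKKTPoint x y w b v lam s) (i : Fin n) (j : Fin k) : 0 ≤ s i j :=
  (h.s_mem_Icc i j).1

theorem s_le_one (h : IsKKTPoint x y w b v lam s) (i : Fin n) (j : Fin k) : s i j ≤ 1 :=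
  (h.s_mem_Icc i j).2

theorem dualMass_nonneg (h : IsKKTPoint x y w b v lam s) (I : Finset (Fin n)) (j : Fin k) :
    0 ≤ dualMass lam s I j :=
  sum_nonneg fun l _ => mul_nonneg (h.lam_nonneg l) (h.s_nonneg l j)

theorem inner_add_eq (h : IsKKTPoint x y w b v lam s)
    (hI : ∀ i, i ∈ I ↔ y i * net w b v (x i) = 1) (j : Fin k)
    (u : EuclideanSpace ℝ (Fin d)) : ⟪w j, u⟫_ℝ + b j = v j * φ j u := by
  rw [h.w_eq j, h.b_eq j, sum_inner, ← sum_add_distrib, dualAct, mul_sum,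
    ← sum_subset (subset_univ I)]
  · exact sum_congr rfl fun l _ => by rw [real_inner_smul_left]; ring
  · intro l _ hl
    rw [h.lam_eq_zero l fun h1 => hl ((hI l).2 h1)]
    simp

theorem max_zero_mul_dualAct (h : IsKKTPoint x y w b v lam s)
    (hI : ∀ i, i ∈ I ↔ y i * net w b v (x i) = 1) (i : Fin n) (j : Fin k) :
    max 0 (v j * φ j (x i)) = s i j * (v j * φ j (x i)) := by
  rw [← h.inner_add_eq hI]
  exact max_zero_eq_mul_of_sign (h.s_eq_one i j) (h.s_eq_zero i j)

theorem mul_mul_dualAct_nonneg (h : IsKKTPoint x y w b v lam s)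
    (hI : ∀ i, i ∈ I ↔ y i * net w b v (x i) = 1) (i : Fin n) (j : Fin k) :
    0 ≤ s i j * (v j * φ j (x i)) :=
  h.max_zero_mul_dualAct hI i j ▸ le_max_left _ _

theorem mul_dualAct_le (h : IsKKTPoint x y w b v lam s)
    (hI : ∀ i, i ∈ I ↔ y i * net w b v (x i) = 1) (i : Fin n) (j : Fin k) :
    v j * φ j (x i) ≤ s i j * (v j * φ j (x i)) :=
  h.max_zero_mul_dualAct hI i j ▸ le_max_right _ _

theorem net_eq (h : IsKKTPoint x y w b v lam s)
    (hI : ∀ i, i ∈ I ↔ y i * net w b v (x i) = 1) (u : EuclideanSpace ℝ (Fin d)) :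
    net w b v u = ∑ j, v j * max 0 (v j * φ j u) := by
  simp only [net, h.inner_add_eq hI]

theorem sum_margin_eq (h : IsKKTPoint x y w b v lam s)
    (hI : ∀ i, i ∈ I ↔ y i * net w b v (x i) = 1) (hi : i ∈ I) :
    ∑ j, v j ^ 2 * s i j * (y i * φ j (x i)) = 1 := by
  rw [← (hI i).1 hi, h.net_eq hI, mul_sum]
  exact sum_congr rfl fun j _ => by rw [h.max_zero_mul_dualAct hI]; ring

theorem dualAct_eq_zero (h : IsKKTPoint x y w b v lam s)
    (hI : ∀ i, i ∈ I ↔ y i * net w b v (x i) = 1) (hv : v j ≠ 0) (hs0 : s i j ≠ 0)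
    (hs1 : s i j ≠ 1) : φ j (x i) = 0 := by
  have hpos : 0 < s i j := (h.s_nonneg i j).lt_of_ne' hs0
  have hlt : s i j < 1 := (h.s_le_one i j).lt_of_ne hs1
  have hle : v j * φ j (x i) ≤ 0 := by nlinarith [h.mul_dualAct_le hI i j]
  have hge : 0 ≤ v j * φ j (x i) := nonneg_of_mul_nonneg_right
    (by linarith [h.mul_mul_dualAct_nonneg hI i j]) hpos
  exact (mul_eq_zero.1 (le_antisymm hle hge)).resolve_left hv

theorem selfWeight_le (h : IsKKTPoint x y w b v lam s)
    (hI : ∀ i, i ∈ I ↔ y i * net w b v (x i) = 1) (hx : NearOrthogonalOn x I D q)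
    (hq : 0 ≤ q) (hy : ∀ l ∈ I, |y l| = 1) (hi : i ∈ I) :
    (D + 1) * selfWeight v lam s i ≤ 1 + (q + 1) * weight v lam s I univ := by
  have key j := (abs_le.1 (hx.abs_mul_dualAct_sub_le hq hy h.lam_nonneg h.s_nonneg hi j)).1
  calc (D + 1) * selfWeight v lam s i
      = ∑ j, v j ^ 2 * s i j * (lam i * s i j * (D + 1)) := by
        rw [selfWeight, mul_sum]; exact sum_congr rfl fun j _ => by ring
    _ ≤ ∑ j, v j ^ 2 * s i j * (y i * φ j (x i) + (q + 1) * S j) :=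
        sum_le_sum fun j _ => mul_le_mul_of_nonneg_left (by linarith [key j])
          (mul_nonneg (sq_nonneg _) (h.s_nonneg i j))
    _ = 1 + ∑ j, s i j * (v j ^ 2 * ((q + 1) * S j)) := by
        rw [← h.sum_margin_eq hI hi, ← sum_add_distrib]
        exact sum_congr rfl fun j _ => by ring
    _ ≤ 1 + ∑ j, v j ^ 2 * ((q + 1) * S j) := by
        refine (add_le_add_iff_left 1).2
          (sum_le_sum fun j _ => mul_le_of_le_one_left ?_ (h.s_le_one i j))
        exact mul_nonneg (sq_nonneg _) (mul_nonneg (by linarith) (h.dualMass_nonneg I j))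
    _ = 1 + (q + 1) * weight v lam s I univ := by
        rw [weight, mul_sum]; exact congrArg _ (sum_congr rfl fun j _ => by ring)

theorem dualMass_le_three_halves_mul_sum (h : IsKKTPoint x y w b v lam s)
    (hI : ∀ i, i ∈ I ↔ y i * net w b v (x i) = 1) (hx : NearOrthogonalOn x I D q)
    (hq : 0 ≤ q) (hy : ∀ l ∈ I, |y l| = 1) (hmq : #I * (q + 1) ≤ (D + 1) / 3)
    (hv : v j ≠ 0) : S j ≤ 3 / 2 * ∑ i ∈ I, lam i * s i j ^ 2 := by
  rcases I.eq_empty_or_nonempty with rfl | ⟨i₀, hi₀⟩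
  · simp [dualMass]
  have hD := hx.nonneg hi₀
  have hS := h.dualMass_nonneg I j
  have step : ∀ i ∈ I, lam i * s i j * (D + 1) ≤ lam i * s i j ^ 2 * (D + 1) + (q + 1) * S j := by
    intro i hi
    have hα : 0 ≤ lam i * s i j ^ 2 * (D + 1) :=
      mul_nonneg (mul_nonneg (h.lam_nonneg i) (sq_nonneg _)) (by linarith)
    by_cases hs0 : s i j = 0
    · rw [hs0]; nlinarith
    by_cases hs1 : s i j = 1
    · rw [hs1]; nlinarith
    have key := (abs_le.1 (hx.abs_mul_dualAct_sub_le hq hy h.lam_nonneg h.s_nonneg hi j)).1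
    rw [h.dualAct_eq_zero hI hv hs0 hs1, mul_zero] at key
    linarith
  have hsum := sum_le_sum step
  rw [← sum_mul, sum_add_distrib, ← sum_mul, sum_const, nsmul_eq_mul] at hsum
  change S j * (D + 1) ≤ _ at hsum
  nlinarith [mul_le_mul_of_nonneg_right hmq hS]

theorem mul_weight_univ_le_one (h : IsKKTPoint x y w b v lam s)
    (hI : ∀ i, i ∈ I ↔ y i * net w b v (x i) = 1) (hx : NearOrthogonalOn x I D q)
    (hq : 0 ≤ q) (hy : ∀ l ∈ I, |y l| = 1) (hmq : #I * (q + 1) ≤ (D + 1) / 3) :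
    (q + 1) * weight v lam s I univ ≤ 1 := by
  rcases I.eq_empty_or_nonempty with rfl | ⟨i₀, hi₀⟩
  · simp [weight, dualMass]
  have hD := hx.nonneg hi₀
  have hG : weight v lam s I univ ≤ 3 / 2 * ∑ i ∈ I, selfWeight v lam s i := by
    calc weight v lam s I univ
        ≤ ∑ j, 3 / 2 * (v j ^ 2 * ∑ i ∈ I, lam i * s i j ^ 2) := sum_le_sum fun j _ => by
          by_cases hv : v j = 0
          · simp [hv]
          nlinarith [h.dualMass_le_three_halves_mul_sum hI hx hq hy hmq hv, sq_nonneg (v j)]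
      _ = 3 / 2 * ∑ i ∈ I, selfWeight v lam s i := by
          simp only [selfWeight, mul_sum]
          rw [sum_comm]
  have hB : (D + 1) * ∑ i ∈ I, selfWeight v lam s i
      ≤ #I * (1 + (q + 1) * weight v lam s I univ) := by
    rw [mul_sum, ← nsmul_eq_mul, ← sum_const]
    exact sum_le_sum fun i hi => h.selfWeight_le hI hx hq hy hi
  have hG0 : 0 ≤ weight v lam s I univ :=
    sum_nonneg fun j _ => mul_nonneg (sq_nonneg _) (h.dualMass_nonneg I j)
  have hQG : 0 ≤ (q + 1) * weight v lam s I univ := mul_nonneg (by linarith) hG0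
  nlinarith [mul_le_mul_of_nonneg_left hG (by positivity : (0:ℝ) ≤ (q + 1) * (D + 1)),
    mul_le_mul_of_nonneg_left hB (by linarith : (0:ℝ) ≤ q + 1),
    mul_le_mul_of_nonneg_right hmq (by linarith : (0:ℝ) ≤ 1 + (q + 1) * weight v lam s I univ)]

theorem sum_le_four_thirds_mul_dualMass (h : IsKKTPoint x y w b v lam s) (hq : 0 ≤ q)
    (hmq : #I * (q + 1) ≤ (D + 1) / 3) {J : Finset (Fin n)} (hJ : J ⊆ I) (j : Fin k) :
    ∑ i ∈ J, (lam i * s i j * (D + 1) + (q + 1) * S j) ≤ 4 / 3 * (D + 1) * S j := by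
  rw [sum_add_distrib, ← sum_mul, sum_const, nsmul_eq_mul]
  have hS := h.dualMass_nonneg I j
  have hJS : ∑ i ∈ J, lam i * s i j ≤ S j :=
    sum_le_sum_of_subset_of_nonneg hJ fun i _ _ => mul_nonneg (h.lam_nonneg i) (h.s_nonneg i j)
  have hJI : (#J : ℝ) ≤ #I := by exact_mod_cast card_le_card hJ
  have hD : 0 ≤ D + 1 := by nlinarith
  nlinarith [mul_le_mul_of_nonneg_right hJS hD, mul_le_mul_of_nonneg_right hmq hS,
    mul_le_mul_of_nonneg_right hJI (mul_nonneg (by linarith : (0:ℝ) ≤ q + 1) hS)]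

theorem card_filter_label_one_le (h : IsKKTPoint x y w b v lam s)
    (hI : ∀ i, i ∈ I ↔ y i * net w b v (x i) = 1) (hx : NearOrthogonalOn x I D q)
    (hq : 0 ≤ q) (hy : ∀ l ∈ I, |y l| = 1) (hmq : #I * (q + 1) ≤ (D + 1) / 3) :
    (#(I.filter fun i => y i = 1) : ℝ)
      ≤ 4 / 3 * (D + 1) * weight v lam s I (univ.filter fun j => 0 < v j) := by
  have one_le : ∀ i ∈ I.filter (fun i => y i = 1), (1 : ℝ)
      ≤ ∑ j ∈ univ.filter (fun j => 0 < v j),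
          v j ^ 2 * (lam i * s i j * (D + 1) + (q + 1) * S j) := by
    intro i hi
    obtain ⟨hi, hyi⟩ := mem_filter.1 hi
    refine (h.sum_margin_eq hI hi).symm.trans_le ?_
    rw [sum_filter]
    refine sum_le_sum fun j _ => ?_
    rw [hyi, one_mul]
    split_ifs with hv
    · have key := (abs_le.1 (hx.abs_mul_dualAct_sub_le hq hy h.lam_nonneg h.s_nonneg hi j)).2
      rw [hyi, one_mul] at key
      have hR : 0 ≤ lam i * s i j * (D + 1) + (q + 1) * S j := by
        have := hx.nonneg hi
        have := h.dualMass_nonneg I j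
        have := h.lam_nonneg i
        have := h.s_nonneg i j
        positivity
      rw [mul_assoc]
      refine mul_le_mul_of_nonneg_left ?_ (sq_nonneg _)
      nlinarith [h.s_nonneg i j, h.s_le_one i j]
    · calc v j ^ 2 * s i j * φ j (x i) = v j * (s i j * (v j * φ j (x i))) := by ring
        _ ≤ 0 := mul_nonpos_of_nonpos_of_nonneg (not_lt.1 hv) (h.mul_mul_dualAct_nonneg hI i j)
  calc (#(I.filter fun i => y i = 1) : ℝ)
      = ∑ i ∈ I.filter (fun i => y i = 1), (1 : ℝ) := by rw [sum_const, nsmul_one]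
    _ ≤ ∑ i ∈ I.filter (fun i => y i = 1), ∑ j ∈ univ.filter (fun j => 0 < v j),
          v j ^ 2 * (lam i * s i j * (D + 1) + (q + 1) * S j) := sum_le_sum one_le
    _ = ∑ j ∈ univ.filter (fun j => 0 < v j), v j ^ 2 *
          ∑ i ∈ I.filter (fun i => y i = 1), (lam i * s i j * (D + 1) + (q + 1) * S j) := by
        rw [sum_comm]; simp only [mul_sum]
    _ ≤ ∑ j ∈ univ.filter (fun j => 0 < v j), v j ^ 2 * (4 / 3 * (D + 1) * S j) :=
        sum_le_sum fun j _ => mul_le_mul_of_nonneg_left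
          (h.sum_le_four_thirds_mul_dualMass hq hmq (filter_subset _ _) j) (sq_nonneg _)
    _ = 4 / 3 * (D + 1) * weight v lam s I (univ.filter fun j => 0 < v j) := by
        rw [weight, mul_sum]; exact sum_congr rfl fun j _ => by ring

theorem le_neuron_of_pos (h : IsKKTPoint x y w b v lam s)
    (hI : ∀ i, i ∈ I ↔ y i * net w b v (x i) = 1) (hx : NearOrthogonalOn x I D q)
    (hq : 0 ≤ q) (hy : ∀ l ∈ I, |y l| = 1) (hi : i ∈ I) (hyi : y i = -1) (hv : 0 < v j)
    {τ : ℝ} {u : EuclideanSpace ℝ (Fin d)} (hτ : 0 ≤ τ)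
    (hu : φ j (x i) + (2 * (q + 1) + τ) * S j ≤ φ j u) :
    τ * (v j ^ 2 * S j) ≤ v j * max 0 (v j * φ j u) := by
  have key := abs_le.1 (hx.abs_mul_dualAct_sub_le hq hy h.lam_nonneg h.s_nonneg hi j)
  rw [hyi, neg_one_mul] at key
  have hα : lam i * s i j * (D + 1) ≤ (q + 1) * S j := by
    rcases le_or_gt 0 (φ j (x i)) with hφ | hφ
    · linarith [key.1]
    · have hs : s i j = 0 := le_antisymm (nonpos_of_mul_nonneg_left
        (h.mul_mul_dualAct_nonneg hI i j) (mul_neg_of_pos_of_neg hv hφ)) (h.s_nonneg i j)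
      rw [hs, mul_zero, zero_mul]
      exact mul_nonneg (by linarith) (h.dualMass_nonneg I j)
  have hφu : τ * S j ≤ φ j u := by linarith [key.2]
  rw [max_eq_right (mul_nonneg hv.le ((mul_nonneg hτ (h.dualMass_nonneg I j)).trans hφu))]
  nlinarith [mul_le_mul_of_nonneg_left hφu (sq_nonneg (v j))]

theorem neg_le_neuron_of_nonpos (h : IsKKTPoint x y w b v lam s)
    (hI : ∀ i, i ∈ I ↔ y i * net w b v (x i) = 1) (hx : NearOrthogonalOn x I D q)
    (hq : 0 ≤ q) (hy : ∀ l ∈ I, |y l| = 1) (hi : i ∈ I) (hyi : y i = -1) (hv : v j ≤ 0)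
    {τ : ℝ} {u : EuclideanSpace ℝ (Fin d)} (hτ : 0 ≤ τ)
    (hu : φ j (x i) + (2 * (q + 1) + τ) * S j ≤ φ j u) :
    -((D + 1) * (v j ^ 2 * (lam i * s i j ^ 2))) ≤ v j * max 0 (v j * φ j u) := by
  have hS := h.dualMass_nonneg I j
  rcases le_or_gt (v j * φ j u) 0 with hneg | hpos
  · rw [max_eq_left hneg, mul_zero, neg_nonpos]
    have := hx.nonneg hi
    have := h.lam_nonneg i
    positivity
  rw [max_eq_right hpos.le]
  have hφu : φ j u < 0 := neg_of_mul_pos_right hpos hv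
  have key := (abs_le.1 (hx.abs_mul_dualAct_sub_le hq hy h.lam_nonneg h.s_nonneg hi j)).2
  rw [hyi, neg_one_mul] at key
  by_cases hs1 : s i j = 1
  · rw [hs1] at key ⊢
    have : -(lam i * 1 * (D + 1)) ≤ φ j u := by nlinarith
    nlinarith [mul_le_mul_of_nonneg_left this (sq_nonneg (v j))]
  · exfalso
    have hlt : s i j < 1 := (h.s_le_one i j).lt_of_ne hs1
    have hvφ : v j * φ j (x i) ≤ 0 := by nlinarith [h.mul_dualAct_le hI i j]
    have hφ : 0 ≤ φ j (x i) := by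
      by_contra! hφ
      nlinarith [mul_pos_of_neg_of_neg (hv.lt_of_ne fun h0 => by simp [h0] at hpos) hφ]
    nlinarith

theorem one_le_net_of_shift (h : IsKKTPoint x y w b v lam s)
    (hI : ∀ i, i ∈ I ↔ y i * net w b v (x i) = 1) (hx : NearOrthogonalOn x I D q)
    (hq : 0 ≤ q) (hy : ∀ l ∈ I, |y l| = 1) (hmq : #I * (q + 1) ≤ (D + 1) / 3)
    (hi : i ∈ I) (hyi : y i = -1) {τ : ℝ} {u : EuclideanSpace ℝ (Fin d)} (hτ : 0 ≤ τ)
    (hτG : 3 ≤ τ * weight v lam s I (univ.filter fun j => 0 < v j))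
    (hu : ∀ j, φ j (x i) + (2 * (q + 1) + τ) * S j ≤ φ j u) :
    1 ≤ net w b v u := by
  have hterm : ∀ j, τ * (if 0 < v j then v j ^ 2 * S j else 0)
      - (D + 1) * (v j ^ 2 * (lam i * s i j ^ 2)) ≤ v j * max 0 (v j * φ j u) := by
    intro j
    split_ifs with hv
    · have := hx.nonneg hi
      have := h.lam_nonneg i
      have : 0 ≤ (D + 1) * (v j ^ 2 * (lam i * s i j ^ 2)) := by positivity
      linarith [h.le_neuron_of_pos hI hx hq hy hi hyi hv hτ (hu j)]
    · rw [mul_zero, zero_sub]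
      exact h.neg_le_neuron_of_nonpos hI hx hq hy hi hyi (not_lt.1 hv) hτ (hu j)
  have hsum := sum_le_sum fun j (_ : j ∈ univ) => hterm j
  rw [sum_sub_distrib, ← mul_sum, ← mul_sum, ← sum_filter, ← h.net_eq hI] at hsum
  change τ * weight v lam s I _ - (D + 1) * selfWeight v lam s i ≤ _ at hsum
  linarith [h.selfWeight_le hI hx hq hy hi, h.mul_weight_univ_le_one hI hx hq hy hmq]

theorem one_le_net_add_flipScale_smul (h : IsKKTPoint x y w b v lam s)
    (hI : ∀ i, i ∈ I ↔ y i * net w b v (x i) = 1) (hx : NearOrthogonalOn x I D q)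
    (hq : 0 ≤ q) (hy : ∀ l ∈ I, |y l| = 1) (hmq : #I * (q + 1) ≤ (D + 1) / 3) {c : ℝ}
    (hc : 0 < c) (hIp : c * #I ≤ #(I.filter fun i => y i = 1)) (hi : i ∈ I)
    (hyi : y i = -1) :
    1 ≤ net w b v (x i + flipScale D q c #I • ∑ l ∈ I, y l • x l) := by
  have hm : (1 : ℝ) ≤ #I := by exact_mod_cast card_pos.2 ⟨i, hi⟩
  have hD := hx.nonneg hi
  have hcm : 0 < c * #I := by positivity
  refine h.one_le_net_of_shift hI hx hq hy hmq hi hyi (τ := 4 * (D + 1) / (c * #I))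
    (by positivity) ?_ fun j => ?_
  · rw [div_mul_eq_mul_div, le_div_iff₀ hcm]
    linarith [h.card_filter_label_one_le hI hx hq hy hmq]
  · rw [dualAct_add_smul, ← flipScale_mul_sub hD hm hmq, mul_assoc]
    gcongr
    · exact (flipScale_pos hD hq hm hmq hc).le
    · exact hx.sub_mul_dualMass_le hq hy h.lam_nonneg h.s_nonneg j

theorem net_sub_flipScale_smul_le (h : IsKKTPoint x y w b v lam s)
    (hI : ∀ i, i ∈ I ↔ y i * net w b v (x i) = 1) (hx : NearOrthogonalOn x I D q)
    (hq : 0 ≤ q) (hy : ∀ l ∈ I, |y l| = 1) (hmq : #I * (q + 1) ≤ (D + 1) / 3) {c : ℝ}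
    (hc : 0 < c) (hIm : c * #I ≤ #(I.filter fun i => y i = -1)) (hi : i ∈ I)
    (hyi : y i = 1) :
    net w b v (x i - flipScale D q c #I • ∑ l ∈ I, y l • x l) ≤ -1 := by
  have hI' : ∀ i, i ∈ I ↔ (-y) i * net w b (-v) (x i) = 1 := by
    simpa only [Pi.neg_apply, net_neg_right, neg_mul_neg] using hI
  have hfilter : I.filter (fun i => (-y) i = 1) = I.filter fun i => y i = -1 :=
    filter_congr fun i _ => by rw [Pi.neg_apply, neg_eq_iff_eq_neg]
  have := h.neg.one_le_net_add_flipScale_smul hI' hx hq (by simpa only [Pi.neg_apply, abs_neg])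
    hmq hc (by rwa [hfilter]) hi (by rw [Pi.neg_apply, hyi])
  simp only [Pi.neg_apply, neg_smul, sum_neg_distrib, smul_neg, ← sub_eq_add_neg,
    net_neg_right] at this
  linarith

end IsKKTPoint

theorem kkt_networks_nonrobust_margin_set_general (d n k : ℕ)
    (x : Fin n → EuclideanSpace ℝ (Fin d)) (y : Fin n → ℝ)
    (w : Fin k → EuclideanSpace ℝ (Fin d)) (b v : Fin k → ℝ)
    (lam : Fin n → ℝ) (s : Fin n → Fin k → ℝ)
    (hy : ∀ i, y i = 1 ∨ y i = -1)
    (hlam : ∀ i, 0 ≤ lam i)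
    (hs01 : ∀ i j, s i j ∈ Set.Icc (0 : ℝ) 1)
    (hcomp : ∀ i, y i * net w b v (x i) ≠ 1 → lam i = 0)
    (hs1 : ∀ i j, 0 < ⟪w j, x i⟫_ℝ + b j → s i j = 1)
    (hs0 : ∀ i j, ⟪w j, x i⟫_ℝ + b j < 0 → s i j = 0)
    (hw : ∀ j, w j = ∑ i, (lam i * y i * v j * s i j) • x i)
    (hb : ∀ j, b j = ∑ i, lam i * y i * v j * s i j)
    (I : Finset (Fin n)) (hI : ∀ i, i ∈ I ↔ y i * net w b v (x i) = 1)
    (hxI : ∀ i ∈ I, ‖x i‖ = Real.sqrt d)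
    (q : ℝ) (hq0 : 0 ≤ q)
    (hq : ∀ i ∈ I, ∀ j ∈ I, i ≠ j → |⟪x i, x j⟫_ℝ| ≤ q)
    (hmq : (I.card : ℝ) * (q + 1) ≤ ((d : ℝ) + 1) / 3)
    (c : ℝ) (hc0 : 0 < c) (hc1 : c ≤ 1)
    (hIp : c * I.card ≤ ((I.filter fun i => y i = 1).card : ℝ))
    (hIm : c * I.card ≤ ((I.filter fun i => y i = -1).card : ℝ)) :
    ∃ η : ℝ, 0 < η ∧
      ‖η • ∑ i ∈ I, y i • x i‖ ≤ 18 * Real.sqrt (2 * d) / (c * Real.sqrt I.card) ∧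
      (∀ i ∈ I, y i = 1 → net w b v (x i - η • ∑ l ∈ I, y l • x l) ≤ -1) ∧
      (∀ i ∈ I, y i = -1 → 1 ≤ net w b v (x i + η • ∑ l ∈ I, y l • x l)) := by
  obtain rfl | hI₀ := I.eq_empty_or_nonempty
  · exact ⟨1, one_pos, by simp, by simp, by simp⟩
  have hkkt : IsKKTPoint x y w b v lam s := ⟨hlam, hs01, hcomp, hs1, hs0, hw, hb⟩
  have hx : NearOrthogonalOn x I d q :=
    ⟨fun i hi => by rw [real_inner_self_eq_norm_sq, hxI i hi, Real.sq_sqrt d.cast_nonneg], hq⟩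
  have hy' : ∀ l ∈ I, |y l| = 1 := fun l _ => (abs_eq zero_le_one).2 (hy l)
  have hm : (1 : ℝ) ≤ #I := by exact_mod_cast card_pos.2 hI₀
  exact ⟨flipScale d q c #I, flipScale_pos d.cast_nonneg hq0 hm hmq hc0,
    hx.norm_flipScale_smul_le hq0 hy' hI₀ hmq hc0 hc1,
    fun i hi hyi => hkkt.net_sub_flipScale_smul_le hI hx hq0 hy' hmq hc0 hIm hi hyi,
    fun i hi hyi => hkkt.one_le_net_add_flipScale_smul hI hx hq0 hy' hmq hc0 hIp hi hyi⟩

/-- under the KKT conditions of the max-margin problem, if the set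
`I` of examples attaining margin exactly `1` consists of points of norm `√d`
with pairwise inner products at most `q`, `|I|(q+1) ≤ (d+1)/3`, and both labels
make up at least a `c`-fraction of `I`, then there is a single small
perturbation `z = η ∑_{i∈I} yᵢ xᵢ` with `‖z‖ ≤ 18√(2d)/(c√|I|)` flipping the
margin of every positively labeled point of `I` (when subtracted) and of every
negatively labeled point of `I` (when added). -/
theorem kkt_networks_nonrobust_margin_set (d n k : ℕ)
    (x : Fin n → EuclideanSpace ℝ (Fin d)) (y : Fin n → ℝ)
    (w : Fin k → EuclideanSpace ℝ (Fin d)) (b v : Fin k → ℝ)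
    (lam : Fin n → ℝ) (s : Fin n → Fin k → ℝ)
    (hy : ∀ i, y i = 1 ∨ y i = -1)
    (hlam : ∀ i, 0 ≤ lam i)
    (hs01 : ∀ i j, s i j ∈ Set.Icc (0 : ℝ) 1)
    (hmargin : ∀ i, 1 ≤ y i * net w b v (x i))
    (hcomp : ∀ i, y i * net w b v (x i) ≠ 1 → lam i = 0)
    (hs1 : ∀ i j, 0 < ⟪w j, x i⟫_ℝ + b j → s i j = 1)
    (hs0 : ∀ i j, ⟪w j, x i⟫_ℝ + b j < 0 → s i j = 0)
    (hw : ∀ j, w j = ∑ i, (lam i * y i * v j * s i j) • x i)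
    (hb : ∀ j, b j = ∑ i, lam i * y i * v j * s i j)
    (I : Finset (Fin n)) (hI : ∀ i, i ∈ I ↔ y i * net w b v (x i) = 1)
    (hxI : ∀ i ∈ I, ‖x i‖ = Real.sqrt d)
    (q : ℝ) (hq0 : 0 ≤ q)
    (hq : ∀ i ∈ I, ∀ j ∈ I, i ≠ j → |⟪x i, x j⟫_ℝ| ≤ q)
    (hmq : (I.card : ℝ) * (q + 1) ≤ ((d : ℝ) + 1) / 3)
    (c : ℝ) (hc0 : 0 < c) (hc1 : c ≤ 1)
    (hIp : c * I.card ≤ ((I.filter fun i => y i = 1).card : ℝ))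
    (hIm : c * I.card ≤ ((I.filter fun i => y i = -1).card : ℝ)) :
    ∃ η : ℝ, 0 < η ∧
      ‖η • ∑ i ∈ I, y i • x i‖ ≤ 18 * Real.sqrt (2 * d) / (c * Real.sqrt I.card) ∧
      (∀ i ∈ I, y i = 1 → net w b v (x i - η • ∑ l ∈ I, y l • x l) ≤ -1) ∧
      (∀ i ∈ I, y i = -1 → 1 ≤ net w b v (x i + η • ∑ l ∈ I, y l • x l)) :=
  kkt_networks_nonrobust_margin_set_general d n k x y w b v lam s hy hlam hs01 hcomp hs1 hs0 hw hb I
    hI hxI q hq0 hq hmq c hc0 hc1 hIp hIm
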